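/- arXiv:0907.0077 — 2 statements merged into one kernel-verified Lean document; each statement's English description precedes it below -/
import Mathlib

section
/- For any c > 0 and α ∈ (0,1], the function s ↦ exp(-c(1-s)^α) on [0,1] is the probability generating function of a ℕ-valued random variable, and this random variable ξ is discrete α-stable: for every t ∈ [0,1], t^{1/α}∘ξ' + (1-t)^{1/α}∘ξ'' has the same distribution as ξ, where ξ', ξ'' are independent copies of ξ. -/
open scoped ENNReal NNReal
open MeasureTheory ProbabilityTheory

/-- Bernoulli(t) distribution as a `PMF` on `ℕ` (taking values 0 and 1). -/
noncomputable def bernNat (t : ℝ) : PMF ℕ :=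
  (PMF.bernoulli (min (Real.toNNReal t) 1) (min_le_right _ _)).map (fun b => if b then 1 else 0)

/-- Distribution of the sum of two independent `ℕ`-valued random variables. -/
noncomputable def pmfConv (p q : PMF ℕ) : PMF ℕ := p.bind fun a => q.map fun b => a + b

/-- Distribution of the sum of `n` i.i.d. Bernoulli(t) random variables. -/
noncomputable def bernSum (t : ℝ) : ℕ → PMF ℕ
  | 0 => PMF.pure 0
  | n + 1 => pmfConv (bernSum t n) (bernNat t)

/-- Binomial thinning `t ∘ ξ` of a `ℕ`-valued random variable: conditionally on `ξ = n`,
the result is the sum of `n` i.i.d. Bernoulli(t) random variables. -/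
noncomputable def pmfThin (t : ℝ) (p : PMF ℕ) : PMF ℕ := p.bind (bernSum t)

/-- Probability generating function `g_ξ(s) = E[s^ξ]`. -/
noncomputable def pgf (p : PMF ℕ) (s : ℝ) : ℝ := ∑' n : ℕ, (p n).toReal * s ^ n

/-!
The law is compound Poisson: a Poisson(`c`) number of i.i.d. Sibuya(`α`) variables. By the
binomial series the Sibuya law has generating function `1 - (1 - s)^α`, with `n`-th coefficient
`α (1 - α) (2 - α) ⋯ (n - 1 - α) / n!`, nonnegative because `0 ≤ α ≤ 1`. Thinning by `u` replaces
`1 - s` by `u (1 - s)` in a generating function, so both sides of the stability identity have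
generating function `exp (-c (1 - s)^α)`; on `(0, 1)` this determines the law by the identity
theorem for power series.
-/

open Filter Topology Set

/-- With values in `ℝ≥0∞`, the identities for `bind` and convolution are Fubini for nonnegative
series and need no summability hypotheses. -/
noncomputable def ennPgf (p : PMF ℕ) (r : ℝ≥0∞) : ℝ≥0∞ := ∑' n, p n * r ^ n

lemma pgf_eq_toReal_ennPgf (p : PMF ℕ) {s : ℝ} (hs : 0 ≤ s) :
    pgf p s = (ennPgf p (ENNReal.ofReal s)).toReal := by
  rw [ennPgf, ENNReal.tsum_toReal_eq fun n => ENNReal.mul_ne_top (p.apply_ne_top n)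
    (ENNReal.pow_ne_top ENNReal.ofReal_ne_top)]
  simp [pgf, ENNReal.toReal_ofReal hs]

lemma ennPgf_bind {α : Type*} (p : PMF α) (f : α → PMF ℕ) (r : ℝ≥0∞) :
    ennPgf (p.bind f) r = ∑' a, p a * ennPgf (f a) r := by
  simp only [ennPgf, PMF.bind_apply, ← ENNReal.tsum_mul_right, ← ENNReal.tsum_mul_left,
    mul_assoc]
  exact ENNReal.tsum_comm

lemma ennPgf_pure (n : ℕ) (r : ℝ≥0∞) : ennPgf (PMF.pure n) r = r ^ n := by
  rw [ennPgf, tsum_eq_single n fun m hm => by simp [PMF.pure_apply, hm]]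
  simp

lemma ennPgf_map {α : Type*} (p : PMF α) (g : α → ℕ) (r : ℝ≥0∞) :
    ennPgf (p.map g) r = ∑' a, p a * r ^ g a := by
  rw [← PMF.bind_pure_comp, ennPgf_bind]
  simp [ennPgf_pure]

lemma ennPgf_pmfConv (p q : PMF ℕ) (r : ℝ≥0∞) :
    ennPgf (pmfConv p q) r = ennPgf p r * ennPgf q r := by
  simp only [pmfConv, ennPgf_bind, ennPgf_map]
  rw [ennPgf, ← ENNReal.tsum_mul_right]
  refine tsum_congr fun a => ?_
  rw [ennPgf, ← ENNReal.tsum_mul_left, ← ENNReal.tsum_mul_left]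
  exact tsum_congr fun b => by ring

noncomputable def convPow (q : PMF ℕ) : ℕ → PMF ℕ
  | 0 => PMF.pure 0
  | n + 1 => pmfConv (convPow q n) q

lemma ennPgf_convPow (q : PMF ℕ) (n : ℕ) (r : ℝ≥0∞) :
    ennPgf (convPow q n) r = ennPgf q r ^ n := by
  induction n with
  | zero => simp [convPow, ennPgf_pure]
  | succ n ih => rw [convPow, ennPgf_pmfConv, ih, pow_succ]

lemma bernSum_eq_convPow (t : ℝ) : bernSum t = convPow (bernNat t) := by
  funext n
  induction n with
  | zero => rfl
  | succ n ih => rw [bernSum, convPow, ih]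

lemma ennPgf_bernNat {t : ℝ} (ht : t ≤ 1) (r : ℝ≥0∞) :
    ennPgf (bernNat t) r = 1 - ENNReal.ofReal t + ENNReal.ofReal t * r := by
  have hmin : min t.toNNReal 1 = t.toNNReal := min_eq_left (Real.toNNReal_le_one.mpr ht)
  simp [bernNat, ennPgf_map, hmin, PMF.bernoulli_apply, ENNReal.ofReal, add_comm]

lemma ennPgf_pmfThin {t : ℝ} (ht : t ≤ 1) (p : PMF ℕ) (r : ℝ≥0∞) :
    ennPgf (pmfThin t p) r = ennPgf p (1 - ENNReal.ofReal t + ENNReal.ofReal t * r) := by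
  simp only [pmfThin, ennPgf_bind, bernSum_eq_convPow, ennPgf_convPow, ennPgf_bernNat ht]
  rfl

lemma ennPgf_pmfThin_ofReal {t s : ℝ} (ht0 : 0 ≤ t) (ht1 : t ≤ 1) (hs : 0 ≤ s) (p : PMF ℕ) :
    ennPgf (pmfThin t p) (ENNReal.ofReal s) = ennPgf p (ENNReal.ofReal (1 - t * (1 - s))) := by
  rw [ennPgf_pmfThin ht1, ← ENNReal.ofReal_one, ← ENNReal.ofReal_sub _ ht0,
    ← ENNReal.ofReal_mul ht0, ← ENNReal.ofReal_add (by linarith) (by positivity)]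
  ring_nf

theorem eq_zero_of_frequently_tsum_mul_pow_eq_zero {𝕜 : Type*} [NontriviallyNormedField 𝕜]
    [CompleteSpace 𝕜] {d : ℕ → 𝕜} {C : ℝ} (hd : ∀ n, ‖d n‖ ≤ C)
    (h : ∃ᶠ z in 𝓝[≠] 0, ∑' n, d n * z ^ n = 0) : d = 0 := by
  set P := FormalMultilinearSeries.ofScalars 𝕜 d
  have hrad : 0 < P.radius := by
    refine lt_of_lt_of_le (by norm_num) (P.le_radius_of_bound (r := 1 / 2) C fun n => ?_)
    calc ‖P n‖ * ((1 / 2 : ℝ≥0) : ℝ) ^ n ≤ ‖d n‖ * 1 := by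
          gcongr
          · exact (FormalMultilinearSeries.ofScalars_norm 𝕜 d n).le
          · exact pow_le_one₀ (by norm_num) (by norm_num)
      _ ≤ C := by simpa using hd n
  have hP := (P.hasFPowerSeriesOnBall hrad).hasFPowerSeriesAt
  rw [show P.sum = fun z => ∑' n, d n * z ^ n from
    FormalMultilinearSeries.ofScalarsSum_eq_tsum d] at hP
  by_contra hne
  exact h (hP.locally_ne_zero ((FormalMultilinearSeries.ofScalars_series_eq_zero 𝕜).not.mpr hne))

lemma PMF.toReal_apply_le_one {α : Type*} (p : PMF α) (a : α) : (p a).toReal ≤ 1 :=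
  ENNReal.toReal_le_of_le_ofReal zero_le_one (by simpa using p.coe_le_one a)

lemma PMF.summable_toReal_mul_pow (p : PMF ℕ) {s : ℝ} (hs0 : 0 ≤ s) (hs1 : s ≤ 1) :
    Summable fun n => (p n).toReal * s ^ n :=
  (ENNReal.summable_toReal p.tsum_coe_ne_top).of_nonneg_of_le (fun n => by positivity)
    fun n => mul_le_of_le_one_right ENNReal.toReal_nonneg (pow_le_one₀ hs0 hs1)

theorem PMF.ext_of_ennPgf_eq {p q : PMF ℕ}
    (h : ∀ s ∈ Ioo (0 : ℝ) 1, ennPgf p (ENNReal.ofReal s) = ennPgf q (ENNReal.ofReal s)) :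
    p = q := by
  have hbound n : ‖(p n).toReal - (q n).toReal‖ ≤ 1 :=
    (Real.norm_eq_abs _).trans_le <| abs_sub_le_of_nonneg_of_le ENNReal.toReal_nonneg
      (p.toReal_apply_le_one n) ENNReal.toReal_nonneg (q.toReal_apply_le_one n)
  have hvanish : ∀ᶠ s in 𝓝[>] (0 : ℝ), ∑' n, ((p n).toReal - (q n).toReal) * s ^ n = 0 := by
    filter_upwards [Ioo_mem_nhdsGT one_pos] with s hs
    simp only [sub_mul]
    rw [(p.summable_toReal_mul_pow hs.1.le hs.2.le).tsum_sub
      (q.summable_toReal_mul_pow hs.1.le hs.2.le)]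
    change pgf p s - pgf q s = 0
    rw [pgf_eq_toReal_ennPgf p hs.1.le, pgf_eq_toReal_ennPgf q hs.1.le, h s hs, sub_self]
  have hdiff := eq_zero_of_frequently_tsum_mul_pow_eq_zero hbound
    (hvanish.frequently.filter_mono (nhdsWithin_mono _ fun x hx => ne_of_gt hx))
  ext n
  exact (ENNReal.toReal_eq_toReal_iff' (p.apply_ne_top n) (q.apply_ne_top n)).mp
    (sub_eq_zero.mp (congrFun hdiff n))

lemma hasSum_neg_one_pow_mul_choose_mul_pow (α : ℝ) {s : ℝ} (hs : |s| < 1) :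
    HasSum (fun n => (-1) ^ n * Ring.choose α n * s ^ n) ((1 - s) ^ α) := by
  have h := Real.one_add_rpow_hasFPowerSeriesOnBall_zero (a := α) |>.hasSum (y := -s)
    (by simpa [edist_dist, Real.dist_eq] using hs)
  simp only [binomialSeries_apply, List.ofFn_const, List.prod_replicate, smul_eq_mul] at h
  rw [zero_add, ← sub_eq_add_neg] at h
  refine h.congr_fun fun n => ?_
  rw [neg_pow]
  ring

lemma succ_mul_choose_succ {R : Type*} [CommRing R] [BinomialRing R] (r : R) (n : ℕ) :
    ((n : R) + 1) * Ring.choose r (n + 1) = Ring.choose r n * (r - n) := by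
  have h := Ring.choose_smul_choose r (Nat.le_succ n)
  simpa [Nat.choose_succ_self_right, Ring.choose_one_right, nsmul_eq_mul] using h

lemma neg_one_pow_mul_choose_nonpos {α : ℝ} (h0 : 0 ≤ α) (h1 : α ≤ 1) {n : ℕ} (hn : 1 ≤ n) :
    (-1) ^ n * Ring.choose α n ≤ 0 := by
  induction n, hn using Nat.le_induction with
  | base => simpa [Ring.choose_one_right] using h0
  | succ n hn ih =>
    have hn' : (1 : ℝ) ≤ n := by exact_mod_cast hn
    have hrec : ((n : ℝ) + 1) * ((-1) ^ (n + 1) * Ring.choose α (n + 1))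
        = ((-1) ^ n * Ring.choose α n) * (n - α) := by
      rw [pow_succ]
      linear_combination (-(-1 : ℝ) ^ n) * succ_mul_choose_succ α n
    nlinarith

/-- The coefficients of `1 - (1 - s)^α`: the Sibuya distribution. -/
noncomputable def sibuyaCoeff (α : ℝ) (n : ℕ) : ℝ :=
  (if n = 0 then 1 else 0) - (-1) ^ n * Ring.choose α n

lemma sibuyaCoeff_nonneg {α : ℝ} (h0 : 0 ≤ α) (h1 : α ≤ 1) (n : ℕ) : 0 ≤ sibuyaCoeff α n := by
  rcases Nat.eq_zero_or_pos n with rfl | hn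
  · simp [sibuyaCoeff]
  · simpa [sibuyaCoeff, hn.ne'] using neg_one_pow_mul_choose_nonpos h0 h1 hn

lemma hasSum_sibuyaCoeff_mul_pow (α : ℝ) {s : ℝ} (hs : |s| < 1) :
    HasSum (fun n => sibuyaCoeff α n * s ^ n) (1 - (1 - s) ^ α) := by
  refine ((hasSum_ite_eq 0 (1 : ℝ)).sub (hasSum_neg_one_pow_mul_choose_mul_pow α hs)).congr_fun
    fun n => ?_
  rcases eq_or_ne n 0 with rfl | hn <;> simp [sibuyaCoeff, *]

lemma hasSum_sibuyaCoeff {α : ℝ} (h0 : 0 < α) (h1 : α ≤ 1) : HasSum (sibuyaCoeff α) 1 := by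
  have hnn := sibuyaCoeff_nonneg h0.le h1
  have hseries {s : ℝ} (hs : s ∈ Ioo (0 : ℝ) 1) :=
    hasSum_sibuyaCoeff_mul_pow α (abs_lt.mpr ⟨by linarith [hs.1], hs.2⟩)
  have hpartial N : ∑ n ∈ Finset.range N, sibuyaCoeff α n ≤ 1 := by
    have hcont : Continuous fun s : ℝ => ∑ n ∈ Finset.range N, sibuyaCoeff α n * s ^ n := by
      fun_prop
    have hlim := (hcont.tendsto 1).mono_left (nhdsWithin_le_nhds (s := Iio 1))
    refine le_of_tendsto (by simpa using hlim) ?_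
    filter_upwards [Ioo_mem_nhdsLT one_pos] with s hs
    calc ∑ n ∈ Finset.range N, sibuyaCoeff α n * s ^ n ≤ 1 - (1 - s) ^ α :=
          sum_le_hasSum _ (fun n _ => mul_nonneg (hnn n) (pow_nonneg hs.1.le n)) (hseries hs)
      _ ≤ 1 := by linarith [Real.rpow_nonneg (by linarith [hs.2] : 0 ≤ 1 - s) α]
  have hsummable : Summable (sibuyaCoeff α) := summable_of_sum_range_le hnn hpartial
  have hcont : Continuous fun s : ℝ => 1 - (1 - s) ^ α :=
    continuous_const.sub ((continuous_const.sub continuous_id).rpow_const fun _ => Or.inr h0.le)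
  have hlim : Tendsto (fun s : ℝ => ∑' n, sibuyaCoeff α n * s ^ n) (𝓝[<] 1) (𝓝 1) := by
    refine Tendsto.congr' ?_ (by simpa [Real.zero_rpow h0.ne'] using
      (hcont.tendsto 1).mono_left nhdsWithin_le_nhds)
    filter_upwards [Ioo_mem_nhdsLT one_pos] with s hs
    exact (hseries hs).tsum_eq.symm
  have habel := Real.tendsto_tsum_powerSeries_nhdsWithin_lt hsummable.hasSum.tendsto_sum_nat
  exact tendsto_nhds_unique habel hlim ▸ hsummable.hasSum

lemma hasSum_ofReal_sibuyaCoeff {α : ℝ} (h0 : 0 < α) (h1 : α ≤ 1) :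
    HasSum (fun n => ENNReal.ofReal (sibuyaCoeff α n)) 1 := by
  have hsum := hasSum_sibuyaCoeff h0 h1
  rw [ENNReal.summable.hasSum_iff, ← ENNReal.ofReal_tsum_of_nonneg (sibuyaCoeff_nonneg h0.le h1)
    hsum.summable, hsum.tsum_eq, ENNReal.ofReal_one]

noncomputable def sibuya (α : ℝ) (h0 : 0 < α) (h1 : α ≤ 1) : PMF ℕ :=
  ⟨fun n => ENNReal.ofReal (sibuyaCoeff α n), hasSum_ofReal_sibuyaCoeff h0 h1⟩

lemma ennPgf_sibuya {α : ℝ} (h0 : 0 < α) (h1 : α ≤ 1) {s : ℝ} (hs : s ∈ Icc (0 : ℝ) 1) :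
    ennPgf (sibuya α h0 h1) (ENNReal.ofReal s) = ENNReal.ofReal (1 - (1 - s) ^ α) := by
  have hsum : HasSum (fun n => sibuyaCoeff α n * s ^ n) (1 - (1 - s) ^ α) := by
    rcases hs.2.lt_or_eq with hs1 | rfl
    · exact hasSum_sibuyaCoeff_mul_pow α (abs_lt.mpr ⟨by linarith [hs.1], hs1⟩)
    · simpa [Real.zero_rpow h0.ne'] using hasSum_sibuyaCoeff h0 h1
  have hnn n : 0 ≤ sibuyaCoeff α n * s ^ n :=
    mul_nonneg (sibuyaCoeff_nonneg h0.le h1 n) (pow_nonneg hs.1 n)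
  rw [ennPgf, ← hsum.tsum_eq, ENNReal.ofReal_tsum_of_nonneg hnn hsum.summable]
  refine tsum_congr fun n => ?_
  rw [ENNReal.ofReal_mul (sibuyaCoeff_nonneg h0.le h1 n), ENNReal.ofReal_pow hs.1]
  rfl

noncomputable def compoundPoisson (c : ℝ≥0) (q : PMF ℕ) : PMF ℕ :=
  (poissonMeasure c).toPMF.bind (convPow q)

lemma ennPgf_compoundPoisson (c : ℝ≥0) (q : PMF ℕ) {r : ℝ≥0∞} {g : ℝ} (hg : 0 ≤ g)
    (hq : ennPgf q r = ENNReal.ofReal g) :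
    ennPgf (compoundPoisson c q) r = ENNReal.ofReal (Real.exp (-(c * (1 - g)))) := by
  have hexp : HasSum (fun k => Real.exp (-c) * c ^ k / k.factorial * g ^ k)
      (Real.exp (-(c * (1 - g)))) := by
    have h := (NormedSpace.expSeries_div_hasSum_exp ((c : ℝ) * g)).mul_left (Real.exp (-c))
    rw [← Real.exp_eq_exp_ℝ, ← Real.exp_add, show -(c : ℝ) + c * g = -(c * (1 - g)) by ring] at h
    exact h.congr_fun fun k => by rw [mul_pow]; ring
  rw [compoundPoisson, ennPgf_bind, ← hexp.tsum_eq,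
    ENNReal.ofReal_tsum_of_nonneg (fun k => by positivity) hexp.summable]
  refine tsum_congr fun k => ?_
  rw [ennPgf_convPow, hq, Measure.toPMF_apply, poissonMeasure_singleton, ← ENNReal.ofReal_pow hg,
    ← ENNReal.ofReal_mul (by positivity)]

noncomputable def discreteStable (c α : ℝ) (h0 : 0 < α) (h1 : α ≤ 1) : PMF ℕ :=
  compoundPoisson c.toNNReal (sibuya α h0 h1)

lemma ennPgf_discreteStable {c α : ℝ} (hc : 0 ≤ c) (h0 : 0 < α) (h1 : α ≤ 1) {s : ℝ}
    (hs : s ∈ Icc (0 : ℝ) 1) :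
    ennPgf (discreteStable c α h0 h1) (ENNReal.ofReal s)
      = ENNReal.ofReal (Real.exp (-c * (1 - s) ^ α)) := by
  have hg : 0 ≤ 1 - (1 - s) ^ α :=
    sub_nonneg.2 (Real.rpow_le_one (by linarith [hs.2]) (by linarith [hs.1]) h0.le)
  rw [discreteStable, ennPgf_compoundPoisson _ _ hg (ennPgf_sibuya h0 h1 hs),
    Real.coe_toNNReal c hc]
  congr 2
  ring

def IsDiscreteStable (α : ℝ) (p : PMF ℕ) : Prop :=
  ∀ t : ℝ, 0 ≤ t → t ≤ 1 → pmfConv (pmfThin (t ^ (1 / α)) p) (pmfThin ((1 - t) ^ (1 / α)) p) = p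

lemma isDiscreteStable_of_ennPgf_eq {p : PMF ℕ} {c α : ℝ} (hα : 0 < α)
    (h : ∀ s ∈ Icc (0 : ℝ) 1,
      ennPgf p (ENNReal.ofReal s) = ENNReal.ofReal (Real.exp (-c * (1 - s) ^ α))) :
    IsDiscreteStable α p := by
  have hthin : ∀ w ∈ Icc (0 : ℝ) 1, ∀ s ∈ Icc (0 : ℝ) 1,
      ennPgf (pmfThin (w ^ (1 / α)) p) (ENNReal.ofReal s)
        = ENNReal.ofReal (Real.exp (-c * w * (1 - s) ^ α)) := by
    intro w hw s hs
    have hu0 : 0 ≤ w ^ (1 / α) := Real.rpow_nonneg hw.1 _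
    have hu1 : w ^ (1 / α) ≤ 1 := Real.rpow_le_one hw.1 hw.2 (by positivity)
    have hprod0 : 0 ≤ w ^ (1 / α) * (1 - s) := mul_nonneg hu0 (sub_nonneg.2 hs.2)
    have hprod1 : w ^ (1 / α) * (1 - s) ≤ 1 :=
      mul_le_one₀ hu1 (sub_nonneg.2 hs.2) (by linarith [hs.1])
    rw [ennPgf_pmfThin_ofReal hu0 hu1 hs.1, h _ ⟨by linarith, by linarith⟩, sub_sub_cancel,
      Real.mul_rpow hu0 (by linarith [hs.2]), one_div, Real.rpow_inv_rpow hw.1 hα.ne', mul_assoc]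
  intro t ht0 ht1
  refine PMF.ext_of_ennPgf_eq fun s hs => ?_
  have hs' : s ∈ Icc (0 : ℝ) 1 := Ioo_subset_Icc_self hs
  rw [ennPgf_pmfConv, hthin t ⟨ht0, ht1⟩ s hs', hthin (1 - t) ⟨by linarith, by linarith⟩ s hs',
    h s hs', ← ENNReal.ofReal_mul (Real.exp_nonneg _), ← Real.exp_add]
  ring_nf

/-- For any `c > 0` and `α ∈ (0,1]`, `s ↦ exp (-c (1-s)^α)` is the pgf of a `ℕ`-valued
random variable, and this random variable is discrete `α`-stable:
`t^{1/α} ∘ ξ' + (1-t)^{1/α} ∘ ξ'' =_d ξ` for all `t ∈ [0,1]`. -/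
theorem exists_discrete_stable (c α : ℝ) (hc : 0 < c) (hα0 : 0 < α) (hα1 : α ≤ 1) :
    ∃ p : PMF ℕ,
      (∀ s : ℝ, 0 ≤ s → s ≤ 1 → pgf p s = Real.exp (-c * (1 - s) ^ α)) ∧
      (∀ t : ℝ, 0 ≤ t → t ≤ 1 →
        pmfConv (pmfThin (t ^ (1/α)) p) (pmfThin ((1 - t) ^ (1/α)) p) = p) := by
  have hpgf s (hs : s ∈ Icc (0 : ℝ) 1) := ennPgf_discreteStable hc.le hα0 hα1 hs
  refine ⟨discreteStable c α hα0 hα1, fun s hs0 hs1 => ?_, isDiscreteStable_of_ennPgf_eq hα0 hpgf⟩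
  rw [pgf_eq_toReal_ennPgf _ hs0, hpgf s ⟨hs0, hs1⟩, ENNReal.toReal_ofReal (Real.exp_nonneg _)]
end

section
/- A ℕ-valued random variable is discrete 1-stable (i.e., t∘ξ' + (1-t)∘ξ'' =_d ξ for all t ∈ [0,1] with independent copies ξ', ξ'') if and only if it is Poisson distributed (with some mean λ ≥ 0). -/
open scoped ENNReal NNReal
open MeasureTheory ProbabilityTheory

/-!
Let `g` be the generating function of `ξ`. Thinning by `t` turns `g(s)` into `g(1 - t + t s)` and
independent sums multiply generating functions, so stability says that `φ(u) = g(1 - u)` satisfies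
`φ(x + y) = φ(x) φ(y)` for `x, y ≥ 0`, `x + y ≤ 1`. Then `φ = φ(·/2)²` is positive and `log φ` is
a continuous additive function on `[0, 1]`, hence linear: `g(s) = exp (λ (s - 1))` with
`λ = -log g(0) ≥ 0`, the generating function of Poisson(`λ`). A distribution on `ℕ` is determined
by its generating function on `(0, 1)`.
-/

open Filter Topology Set Real

-- Valued in `ℝ≥0∞`, so that sums can be reordered without summability side conditions.
noncomputable def epgf (p : PMF ℕ) (s : ℝ≥0∞) : ℝ≥0∞ := ∑' n, p n * s ^ n

lemma epgf_pure (n : ℕ) (s : ℝ≥0∞) : epgf (PMF.pure n) s = s ^ n := by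
  rw [epgf, tsum_eq_single n fun k hk => by simp [PMF.pure_apply, hk]]
  simp

lemma epgf_bind {α : Type*} (p : PMF α) (f : α → PMF ℕ) (s : ℝ≥0∞) :
    epgf (p.bind f) s = ∑' a, p a * epgf (f a) s := by
  simp only [epgf, PMF.bind_apply, ← ENNReal.tsum_mul_right, ← ENNReal.tsum_mul_left, mul_assoc]
  exact ENNReal.tsum_comm

lemma epgf_map {α : Type*} (p : PMF α) (g : α → ℕ) (s : ℝ≥0∞) :
    epgf (p.map g) s = ∑' a, p a * s ^ g a := by
  simp only [PMF.map, epgf_bind, Function.comp_apply, epgf_pure]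

lemma epgf_pmfConv (p q : PMF ℕ) (s : ℝ≥0∞) :
    epgf (pmfConv p q) s = epgf p s * epgf q s := by
  have shift (a : ℕ) : epgf (q.map (a + ·)) s = s ^ a * epgf q s := by
    simp_rw [epgf_map, pow_add, epgf, ← ENNReal.tsum_mul_left, mul_left_comm]
  rw [pmfConv, epgf_bind]
  simp_rw [shift, ← mul_assoc, ENNReal.tsum_mul_right]
  rfl

lemma epgf_bernNat {t : ℝ} (ht : t ≤ 1) (s : ℝ≥0∞) :
    epgf (bernNat t) s = 1 - ENNReal.ofReal t + ENNReal.ofReal t * s := by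
  have : min t.toNNReal 1 = t.toNNReal := min_eq_left (by simpa using ht)
  simp [bernNat, epgf_map, this, ENNReal.ofReal, PMF.bernoulli_apply, add_comm]

lemma epgf_bernSum {t : ℝ} (ht : t ≤ 1) (n : ℕ) (s : ℝ≥0∞) :
    epgf (bernSum t n) s = (1 - ENNReal.ofReal t + ENNReal.ofReal t * s) ^ n := by
  induction n with
  | zero => rw [bernSum, epgf_pure, pow_zero, pow_zero]
  | succ n ih => rw [bernSum, epgf_pmfConv, ih, epgf_bernNat ht, pow_succ]

lemma epgf_pmfThin {t : ℝ} (ht : t ≤ 1) (p : PMF ℕ) (s : ℝ≥0∞) :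
    epgf (pmfThin t p) s = epgf p (1 - ENNReal.ofReal t + ENNReal.ofReal t * s) := by
  rw [pmfThin, epgf_bind]
  simp_rw [epgf_bernSum ht]
  rfl

lemma epgf_le_one (p : PMF ℕ) {s : ℝ≥0∞} (hs : s ≤ 1) : epgf p s ≤ 1 :=
  calc epgf p s ≤ ∑' n, p n :=
        ENNReal.tsum_le_tsum fun _ => mul_le_of_le_one_right' (pow_le_one₀ bot_le hs)
    _ = 1 := p.tsum_coe

lemma pgf_eq_toReal_epgf (p : PMF ℕ) {s : ℝ} (hs : 0 ≤ s) :
    pgf p s = (epgf p (ENNReal.ofReal s)).toReal := by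
  rw [epgf, ENNReal.tsum_toReal_eq fun n => ENNReal.mul_ne_top (p.apply_ne_top n) (by finiteness)]
  simp only [pgf, ENNReal.toReal_mul, ENNReal.toReal_pow, ENNReal.toReal_ofReal hs]

lemma pgf_pmfConv (p q : PMF ℕ) {s : ℝ} (hs : 0 ≤ s) :
    pgf (pmfConv p q) s = pgf p s * pgf q s := by
  simp only [pgf_eq_toReal_epgf _ hs, epgf_pmfConv, ENNReal.toReal_mul]

lemma pgf_pmfThin {t s : ℝ} (ht₀ : 0 ≤ t) (ht₁ : t ≤ 1) (hs : 0 ≤ s) (p : PMF ℕ) :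
    pgf (pmfThin t p) s = pgf p (1 - t + t * s) := by
  rw [pgf_eq_toReal_epgf _ hs, pgf_eq_toReal_epgf _ (by nlinarith), epgf_pmfThin ht₁,
    ENNReal.ofReal_add (by linarith) (by positivity), ENNReal.ofReal_sub _ ht₀,
    ENNReal.ofReal_one, ENNReal.ofReal_mul ht₀]

lemma pgf_le_one (p : PMF ℕ) {s : ℝ} (hs₀ : 0 ≤ s) (hs₁ : s ≤ 1) : pgf p s ≤ 1 := by
  rw [pgf_eq_toReal_epgf _ hs₀]
  exact ENNReal.toReal_le_of_le_ofReal zero_le_one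
    (by simpa using epgf_le_one p (ENNReal.ofReal_le_one.mpr hs₁))

lemma pgf_pos (p : PMF ℕ) {s : ℝ} (hs₀ : 0 < s) (hs₁ : s ≤ 1) : 0 < pgf p s := by
  obtain ⟨n, hn⟩ := p.support_nonempty
  rw [pgf_eq_toReal_epgf _ hs₀.le]
  refine ENNReal.toReal_pos ?_ (ne_top_of_le_ne_top ENNReal.one_ne_top
    (epgf_le_one p (ENNReal.ofReal_le_one.mpr hs₁)))
  exact ENNReal.summable.tsum_ne_zero_iff.mpr ⟨n, by simpa [hs₀] using hn⟩

section PowerSeries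

variable {a b : ℕ → ℝ}

lemma norm_mul_pow_le_abs (a : ℕ → ℝ) (n : ℕ) {s : ℝ} (hs : |s| ≤ 1) : ‖a n * s ^ n‖ ≤ |a n| := by
  rw [Real.norm_eq_abs, abs_mul, abs_pow]
  exact mul_le_of_le_one_right (abs_nonneg _) (pow_le_one₀ (abs_nonneg _) hs)

lemma summable_mul_pow_of_abs_le_one (ha : Summable a) {s : ℝ} (hs : |s| ≤ 1) :
    Summable fun n => a n * s ^ n :=
  ha.abs.of_norm_bounded fun n => norm_mul_pow_le_abs a n hs

lemma continuousOn_tsum_mul_pow (ha : Summable a) :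
    ContinuousOn (fun s => ∑' n, a n * s ^ n) (Icc (-1) 1) :=
  continuousOn_tsum (fun n => by fun_prop) ha.abs fun n _ hs =>
    norm_mul_pow_le_abs a n (abs_le.mpr hs)

lemma tsum_mul_pow_eq_add_mul (ha : Summable a) {s : ℝ} (hs : |s| ≤ 1) :
    ∑' n, a n * s ^ n = a 0 + s * ∑' n, a (n + 1) * s ^ n := by
  rw [(summable_mul_pow_of_abs_le_one ha hs).tsum_eq_zero_add, ← tsum_mul_left]
  simp only [pow_zero, mul_one, pow_succ', mul_left_comm s]

lemma tendsto_tsum_mul_pow_nhdsGT_zero (ha : Summable a) :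
    Tendsto (fun s => ∑' n, a n * s ^ n) (𝓝[>] 0) (𝓝 (a 0)) := by
  have h0 := (continuousOn_tsum_mul_pow ha).continuousAt (Icc_mem_nhds (by norm_num) one_pos)
  simpa [tsum_mul_pow_eq_add_mul ha (abs_zero.trans_le zero_le_one)] using
    h0.tendsto.mono_left nhdsWithin_le_nhds

lemma apply_zero_eq_of_eqOn_tsum_mul_pow (ha : Summable a) (hb : Summable b)
    (h : EqOn (fun s => ∑' n, a n * s ^ n) (fun s => ∑' n, b n * s ^ n) (Ioo 0 1)) :
    a 0 = b 0 :=
  tendsto_nhds_unique ((tendsto_tsum_mul_pow_nhdsGT_zero ha).congr'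
    (eventuallyEq_of_mem (Ioo_mem_nhdsGT one_pos) h)) (tendsto_tsum_mul_pow_nhdsGT_zero hb)

lemma eq_of_eqOn_tsum_mul_pow (ha : Summable a) (hb : Summable b)
    (h : EqOn (fun s => ∑' n, a n * s ^ n) (fun s => ∑' n, b n * s ^ n) (Ioo 0 1)) : a = b := by
  funext k
  induction k generalizing a b with
  | zero => exact apply_zero_eq_of_eqOn_tsum_mul_pow ha hb h
  | succ k ih =>
    refine ih ((summable_nat_add_iff 1).mpr ha) ((summable_nat_add_iff 1).mpr hb) fun s hs => ?_
    have hs' : |s| ≤ 1 := abs_le.mpr ⟨by linarith [hs.1], hs.2.le⟩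
    have := h hs
    simp only [tsum_mul_pow_eq_add_mul ha hs', tsum_mul_pow_eq_add_mul hb hs',
      apply_zero_eq_of_eqOn_tsum_mul_pow ha hb h] at this
    exact mul_left_cancel₀ hs.1.ne' (add_left_cancel this)

end PowerSeries

lemma summable_toReal_pmf (p : PMF ℕ) : Summable fun n => (p n).toReal :=
  ENNReal.summable_toReal (p.tsum_coe ▸ ENNReal.one_ne_top)

lemma continuousOn_pgf (p : PMF ℕ) : ContinuousOn (pgf p) (Icc (-1) 1) :=
  continuousOn_tsum_mul_pow (summable_toReal_pmf p)

lemma eq_of_eqOn_pgf {p q : PMF ℕ} (h : EqOn (pgf p) (pgf q) (Ioo 0 1)) : p = q := by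
  have := eq_of_eqOn_tsum_mul_pow (summable_toReal_pmf p) (summable_toReal_pmf q) h
  ext n
  exact (ENNReal.toReal_eq_toReal_iff' (p.apply_ne_top n) (q.apply_ne_top n)).mp (congrFun this n)

lemma pgf_poissonPMF (r : ℝ≥0) (s : ℝ) : pgf (poissonPMF r) s = exp (r * (s - 1)) := by
  have hterm (n : ℕ) :
      (poissonPMF r n).toReal * s ^ n = exp (-r) * ((r * s) ^ n / n.factorial) := by
    rw [← poissonPMFReal_ofReal_eq_poissonPMF, ENNReal.toReal_ofReal poissonPMFReal_nonneg,
      poissonPMFReal, mul_pow]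
    ring
  have hexp : ∑' n : ℕ, (r * s) ^ n / n.factorial = exp (r * s) := by
    rw [exp_eq_exp_ℝ]
    exact (NormedSpace.expSeries_div_hasSum_exp _).tsum_eq
  rw [pgf, tsum_congr hterm, tsum_mul_left, hexp, ← exp_add]
  ring_nf

lemma apply_natCast_div_eq_mul_apply_one {f : ℝ → ℝ}
    (hadd : ∀ x y, 0 ≤ x → 0 ≤ y → x + y ≤ 1 → f (x + y) = f x + f y)
    {n k : ℕ} (hn : 0 < n) (hk : k ≤ n) : f (k / n) = k / n * f 1 := by
  have hn' : (0 : ℝ) < n := Nat.cast_pos.mpr hn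
  have hnat {k : ℕ} (hk : k ≤ n) : f (k / n) = k * f (1 / n) := by
    induction k with
    | zero => simpa using hadd 0 0 le_rfl le_rfl (by norm_num)
    | succ k ih =>
      have hk' : ((k + 1 : ℕ) : ℝ) ≤ n := Nat.cast_le.mpr hk
      rw [Nat.cast_succ, add_div, hadd _ _ (by positivity) (by positivity)
        (by rwa [← add_div, div_le_one hn', ← Nat.cast_succ]), ih (by omega)]
      ring
  have h1 := hnat le_rfl
  rw [div_self hn'.ne'] at h1
  rw [hnat hk, h1]
  field_simp

lemma apply_eq_mul_apply_one_of_continuousOn {f : ℝ → ℝ} (hf : ContinuousOn f (Icc 0 1))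
    (hadd : ∀ x y, 0 ≤ x → 0 ≤ y → x + y ≤ 1 → f (x + y) = f x + f y) {x : ℝ}
    (hx : x ∈ Icc 0 1) : f x = x * f 1 := by
  set u : ℕ → ℝ := fun n => ⌊x * n⌋₊ / n
  have hu : Tendsto u atTop (𝓝 x) :=
    (tendsto_nat_floor_mul_div_atTop hx.1).comp tendsto_natCast_atTop_atTop
  have hfu : ∀ᶠ n in atTop, u n ∈ Icc 0 1 ∧ f (u n) = u n * f 1 := by
    filter_upwards [eventually_gt_atTop 0] with n hn
    have hk : ⌊x * n⌋₊ ≤ n := Nat.floor_le_of_le (mul_le_of_le_one_left n.cast_nonneg hx.2)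
    exact ⟨⟨by positivity, div_le_one_of_le₀ (by exact_mod_cast hk) n.cast_nonneg⟩,
      apply_natCast_div_eq_mul_apply_one hadd hn hk⟩
  refine tendsto_nhds_unique ?_ (hu.mul_const (f 1))
  exact ((hf x hx).tendsto.comp (tendsto_nhdsWithin_iff.mpr ⟨hu, hfu.mono fun n h => h.1⟩)).congr'
    (hfu.mono fun n h => h.2)

def IsDiscreteOneStable (p : PMF ℕ) : Prop :=
  ∀ t : ℝ, 0 ≤ t → t ≤ 1 → pmfConv (pmfThin t p) (pmfThin (1 - t) p) = p

lemma isDiscreteOneStable_poissonPMF (r : ℝ≥0) : IsDiscreteOneStable (poissonPMF r) := by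
  intro t ht₀ ht₁
  refine eq_of_eqOn_pgf fun s hs => ?_
  rw [pgf_pmfConv _ _ hs.1.le, pgf_pmfThin ht₀ ht₁ hs.1.le,
    pgf_pmfThin (by linarith) (by linarith) hs.1.le]
  simp only [pgf_poissonPMF, ← exp_add]
  ring_nf

namespace IsDiscreteOneStable

variable {p : PMF ℕ}

lemma pgf_one_sub_add (hp : IsDiscreteOneStable p) {x y : ℝ} (hx : 0 ≤ x) (hy : 0 ≤ y)
    (hxy : x + y ≤ 1) : pgf p (1 - (x + y)) = pgf p (1 - x) * pgf p (1 - y) := by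
  -- Stability at `t = x / (x + y)`, evaluated at `s = 1 - (x + y)`; if `x + y = 0`, the junk
  -- value `t = 0` still works.
  set t := x / (x + y)
  have ht : t * (x + y) = x := by
    rcases eq_or_ne (x + y) 0 with h | h
    · simp [t, show x = 0 by linarith]
    · exact div_mul_cancel₀ x h
  have ht₀ : 0 ≤ t := by positivity
  have ht₁ : t ≤ 1 := div_le_one_of_le₀ (by linarith) (by linarith)
  have hs : 0 ≤ 1 - (x + y) := by linarith
  have h := congrArg (pgf · (1 - (x + y))) (hp t ht₀ ht₁)
  rw [pgf_pmfConv _ _ hs, pgf_pmfThin ht₀ ht₁ hs,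
    pgf_pmfThin (by linarith) (by linarith) hs] at h
  rw [← h]
  congr 2
  · linear_combination (-1 : ℝ) * ht
  · linear_combination ht

lemma pgf_pos (hp : IsDiscreteOneStable p) {s : ℝ} (hs₀ : 0 ≤ s) (hs₁ : s ≤ 1) :
    0 < pgf p s := by
  have h : pgf p s = pgf p (1 - (1 - s) / 2) ^ 2 := by
    rw [sq, ← hp.pgf_one_sub_add (by linarith) (by linarith) (by linarith)]
    ring_nf
  rw [h]
  exact pow_pos (_root_.pgf_pos p (by linarith) (by linarith)) 2

lemma exists_pgf_eq_exp (hp : IsDiscreteOneStable p) :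
    ∃ lam : ℝ≥0, ∀ s ∈ Icc (0 : ℝ) 1, pgf p s = exp (lam * (s - 1)) := by
  have hmaps : MapsTo (fun u : ℝ => 1 - u) (Icc 0 1) (Icc 0 1) := fun u hu =>
    ⟨by linarith [hu.2], by linarith [hu.1]⟩
  have hpos {u : ℝ} (hu : u ∈ Icc (0 : ℝ) 1) : pgf p (1 - u) ≠ 0 :=
    (hp.pgf_pos (hmaps hu).1 (hmaps hu).2).ne'
  set f : ℝ → ℝ := fun u => log (pgf p (1 - u))
  have hf : ContinuousOn f (Icc 0 1) :=
    (((continuousOn_pgf p).mono (Icc_subset_Icc (by norm_num) le_rfl)).comp (by fun_prop)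
      hmaps).log fun u hu => hpos hu
  have hadd (x y : ℝ) (hx : 0 ≤ x) (hy : 0 ≤ y) (hxy : x + y ≤ 1) : f (x + y) = f x + f y := by
    simp only [f]
    rw [hp.pgf_one_sub_add hx hy hxy, log_mul (hpos ⟨hx, by linarith⟩) (hpos ⟨hy, by linarith⟩)]
  have hp0 : 0 ≤ -log (pgf p 0) :=
    neg_nonneg.mpr (log_nonpos (hp.pgf_pos le_rfl zero_le_one).le
      (pgf_le_one p le_rfl zero_le_one))
  refine ⟨(-log (pgf p 0)).toNNReal, fun s hs => ?_⟩
  have h := apply_eq_mul_apply_one_of_continuousOn hf hadd (hmaps hs)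
  simp only [f, sub_sub_cancel, sub_self] at h
  rw [← exp_log (hp.pgf_pos hs.1 hs.2), h, Real.coe_toNNReal _ hp0]
  ring_nf

end IsDiscreteOneStable

/-- A `ℕ`-valued random variable is discrete `1`-stable, i.e. `t ∘ ξ' + (1-t) ∘ ξ'' =_d ξ`
for all `t ∈ [0,1]` with independent copies `ξ', ξ''`, if and only if it is Poisson
distributed with some mean `λ ≥ 0`. -/
theorem discrete_one_stable_iff_poisson (p : PMF ℕ) :
    (∀ t : ℝ, 0 ≤ t → t ≤ 1 → pmfConv (pmfThin t p) (pmfThin (1 - t) p) = p) ↔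
    ∃ lam : ℝ≥0, p = poissonPMF lam := by
  constructor
  · intro hp
    obtain ⟨lam, hlam⟩ := IsDiscreteOneStable.exists_pgf_eq_exp hp
    exact ⟨lam, eq_of_eqOn_pgf fun s hs => by rw [hlam s (Ioo_subset_Icc_self hs), pgf_poissonPMF]⟩
  · rintro ⟨lam, rfl⟩
    exact isDiscreteOneStable_poissonPMF lam
end
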